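/- For every n ≥ 1, n! · Σ_{T ∈ PT(n)} ∏_{v ∈ T} 1/h_v = (2n-3)!!, where PT(n) is the set of plane trees with n vertices and (2n-3)!! = (2n-3)(2n-5)···3·1 with (-1)!! = 1. -/

import Mathlib

/-- Plane trees: nonempty rooted trees whose subtrees at each vertex are linearly ordered. -/
inductive PTree : Type
  | node : List PTree → PTree

namespace PTree

mutual
/-- The number of vertices of a plane tree. -/
def size : PTree → ℕ
  | .node cs => sizeList cs + 1
/-- The total number of vertices of a plane forest (a list of plane trees). -/
def sizeList : List PTree → ℕ
  | [] => 0
  | t :: ts => size t + sizeList ts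
end

mutual
/-- The multiset of hook lengths of a plane tree: the hook length of a vertex
is the number of its descendants, counting the vertex itself. -/
def hooks : PTree → Multiset ℕ+
  | .node cs => ⟨sizeList cs + 1, Nat.succ_pos _⟩ ::ₘ hooksList cs
/-- The multiset of hook lengths of a plane forest. -/
def hooksList : List PTree → Multiset ℕ+
  | [] => 0
  | t :: ts => hooks t + hooksList ts
end

end PTree

/-!
Let `b m` be the total weight `∏ 1 / h_v` of the plane forests with `m` vertices. Removing the
root multiplies the weight of a tree by its size, so the trees with `m + 1` vertices weigh
`b m / (m + 1)` in total; splitting off the first tree of a forest gives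
`b (m + 1) = ∑_{i + j = m} b i / (i + 1) * b j`. This recurrence is solved by
`b m = C(2m, m) / 2 ^ m`, because `2 ∑_{i + j = m} Cat i * C(2j, j) = C(2m + 2, m + 1)`,
and `m! * C(2m, m) = 2 ^ m * (2m - 1)‼`.
-/

open Finset Nat

theorem Nat.factorial_mul_centralBinom (n : ℕ) :
    n ! * n.centralBinom = 2 ^ n * (2 * n - 1)‼ := by
  induction n with
  | zero => rfl
  | succ k ih =>
    have hdf : (2 * (k + 1) - 1)‼ = (2 * k + 1) * (2 * k - 1)‼ := by
      rw [show 2 * (k + 1) - 1 = 2 * k + 1 by omega, Nat.doubleFactorial_add_one]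
    calc (k + 1)! * (k + 1).centralBinom
        = k ! * ((k + 1) * (k + 1).centralBinom) := by rw [Nat.factorial_succ]; ring
      _ = 2 * (2 * k + 1) * (k ! * k.centralBinom) := by
        rw [Nat.succ_mul_centralBinom_succ]; ring
      _ = 2 ^ (k + 1) * (2 * (k + 1) - 1)‼ := by rw [ih, hdf]; ring

theorem Nat.two_mul_sum_antidiagonal_catalan_mul_centralBinom (n : ℕ) :
    2 * ∑ p ∈ antidiagonal n, catalan p.1 * p.2.centralBinom = (n + 1).centralBinom := by
  -- `centralBinom j = (j + 1) * catalan j`; symmetrizing the sum turns the factor `j + 1`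
  -- into `(i + 1 + j + 1) / 2 = (n + 2) / 2`, leaving Segner's recurrence.
  have hsymm : ∑ p ∈ antidiagonal n, catalan p.1 * p.2.centralBinom
      = ∑ p ∈ antidiagonal n, catalan p.2 * p.1.centralBinom :=
    (Nat.sum_antidiagonal_swap (f := fun p => catalan p.1 * p.2.centralBinom)).symm
  calc 2 * ∑ p ∈ antidiagonal n, catalan p.1 * p.2.centralBinom
      = ∑ p ∈ antidiagonal n,
          (catalan p.1 * p.2.centralBinom + catalan p.2 * p.1.centralBinom) := by
        rw [sum_add_distrib, ← hsymm, two_mul]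
    _ = ∑ p ∈ antidiagonal n, (n + 2) * (catalan p.1 * catalan p.2) := by
        refine sum_congr rfl fun p hp => ?_
        rw [← succ_mul_catalan_eq_centralBinom, ← succ_mul_catalan_eq_centralBinom,
          ← mem_antidiagonal.mp hp]
        ring
    _ = (n + 1).centralBinom := by
        rw [← mul_sum, ← catalan_succ', succ_mul_catalan_eq_centralBinom]

namespace PTree

def hookWeight (s : Multiset ℕ+) : ℚ := (s.map fun h : ℕ+ => 1 / (h : ℚ)).prod

lemma hookWeight_hooksList_cons (t : PTree) (ts : List PTree) :
    hookWeight (hooksList (t :: ts)) = hookWeight t.hooks * hookWeight (hooksList ts) := by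
  simp only [hookWeight, hooksList, Multiset.map_add, Multiset.prod_add]

lemma hooks_node (cs : List PTree) : (node cs).hooks = (sizeList cs).succPNat ::ₘ hooksList cs :=
  rfl

lemma hookWeight_hooks_node (cs : List PTree) :
    hookWeight (node cs).hooks = hookWeight (hooksList cs) / (sizeList cs + 1) := by
  rw [hookWeight, hookWeight, hooks_node, Multiset.map_cons, Multiset.prod_cons,
    Nat.succPNat_coe, Nat.cast_succ, one_div, inv_mul_eq_div]

open scoped Classical in
noncomputable def forestsOfSize : ℕ → Finset (List PTree)
  | 0 => {[]}
  | m + 1 =>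
    (antidiagonal m).attach.biUnion fun p =>
      ((forestsOfSize p.1.1).image node ×ˢ forestsOfSize p.1.2).image fun q => q.1 :: q.2
  decreasing_by
    all_goals have := mem_antidiagonal.mp p.2; omega

lemma mem_forestsOfSize (m : ℕ) (ts : List PTree) :
    ts ∈ forestsOfSize m ↔ sizeList ts = m := by
  induction m using Nat.strong_induction_on generalizing ts with
  | _ m ih =>
  rcases m with _ | m <;> rcases ts with _ | ⟨⟨cs⟩, rest⟩
  · simp [forestsOfSize, sizeList]
  · simp [forestsOfSize, sizeList, size]
  · simp [forestsOfSize, sizeList]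
  · rw [forestsOfSize]
    simp only [mem_biUnion, mem_attach, true_and, Subtype.exists, mem_image, mem_product,
      List.cons.injEq, Prod.exists, HasAntidiagonal.mem_antidiagonal]
    rw [sizeList, size]
    constructor
    · rintro ⟨a, b, hab, _, _, ⟨⟨_, hcs, rfl⟩, hrest⟩, ⟨⟩, rfl⟩
      rw [(ih a (by omega) cs).mp hcs, (ih b (by omega) _).mp hrest]
      omega
    · intro h
      exact ⟨_, _, by omega, _, _, ⟨⟨cs, (ih _ (by omega) cs).mpr rfl, rfl⟩,
        (ih _ (by omega) rest).mpr rfl⟩, rfl, rfl⟩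

noncomputable def forestWeightSum (m : ℕ) : ℚ :=
  ∑ ts ∈ forestsOfSize m, hookWeight (hooksList ts)

lemma sum_hookWeight_hooks_node (m : ℕ) :
    ∑ cs ∈ forestsOfSize m, hookWeight (node cs).hooks = forestWeightSum m / (m + 1) := by
  rw [forestWeightSum, sum_div]
  refine sum_congr rfl fun cs hcs => ?_
  rw [hookWeight_hooks_node, (mem_forestsOfSize m cs).mp hcs]

open scoped Classical in
lemma forestWeightSum_succ (m : ℕ) :
    forestWeightSum (m + 1)
      = ∑ p ∈ antidiagonal m, forestWeightSum p.1 / (p.1 + 1) * forestWeightSum p.2 := by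
  have hdisj : (↑(antidiagonal m).attach : Set (antidiagonal m)).PairwiseDisjoint fun p =>
      ((forestsOfSize p.1.1).image node ×ˢ forestsOfSize p.1.2).image fun q => q.1 :: q.2 := by
    intro p _ q _ hpq
    refine disjoint_left.mpr fun ts hp hq => hpq ?_
    simp only [mem_image, mem_product] at hp hq
    obtain ⟨⟨_, _⟩, ⟨⟨cs, hcs, rfl⟩, -⟩, rfl⟩ := hp
    obtain ⟨⟨_, _⟩, ⟨⟨_, hcs', rfl⟩, -⟩, ⟨⟩⟩ := hq
    exact HasAntidiagonal.antidiagonal_subtype_ext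
      (((mem_forestsOfSize _ cs).mp hcs).symm.trans ((mem_forestsOfSize _ cs).mp hcs'))
  rw [forestWeightSum, forestsOfSize, sum_biUnion hdisj, ← sum_attach (antidiagonal m)]
  refine sum_congr rfl fun p _ => ?_
  rw [sum_image fun _ _ _ _ h => Prod.ext_iff.mpr (List.cons.inj h), sum_product]
  simp only [hookWeight_hooksList_cons, ← sum_mul_sum]
  rw [sum_image fun _ _ _ _ h => node.inj h, sum_hookWeight_hooks_node]
  rfl

lemma forestWeightSum_eq_centralBinom_div (m : ℕ) :
    forestWeightSum m = m.centralBinom / 2 ^ m := by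
  induction m using Nat.strong_induction_on with
  | _ m ih =>
  rcases m with _ | m
  · simp [forestWeightSum, forestsOfSize, hookWeight, hooksList]
  have hterm : ∀ p ∈ antidiagonal m, forestWeightSum p.1 / (p.1 + 1) * forestWeightSum p.2
      = (catalan p.1 * p.2.centralBinom : ℕ) / 2 ^ m := by
    intro p hp
    have hsum := mem_antidiagonal.mp hp
    rw [ih p.1 (by omega), ih p.2 (by omega), ← succ_mul_catalan_eq_centralBinom, ← hsum,
      pow_add]
    push_cast
    field_simp
  have hconv :=
    congrArg (Nat.cast : ℕ → ℚ) (two_mul_sum_antidiagonal_catalan_mul_centralBinom m)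
  push_cast at hconv
  rw [forestWeightSum_succ, sum_congr rfl hterm, ← sum_div, pow_succ, ← hconv]
  push_cast
  field_simp

lemma finsum_size_succ_eq_sum_node {M : Type*} [AddCommMonoid M] (f : PTree → M) (m : ℕ) :
    ∑ᶠ T : {t : PTree // t.size = m + 1}, f T = ∑ cs ∈ forestsOfSize m, f (node cs) := by
  classical
  have hset : {t : PTree | t.size = m + 1} = ↑((forestsOfSize m).image node) := by
    ext ⟨cs⟩
    simp [size, mem_forestsOfSize]
  calc ∑ᶠ T : {t : PTree // t.size = m + 1}, f T
      = ∑ᶠ t ∈ {t : PTree | t.size = m + 1}, f t := finsum_set_coe_eq_finsum_mem _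
    _ = ∑ cs ∈ forestsOfSize m, f (node cs) := by
      rw [hset, finsum_mem_coe_finset, sum_image fun _ _ _ _ h => node.inj h]

-- As in the main theorem, the left side elaborates with the coercion `ℕ+ → ℚ` inserted
-- through the `Multiset` monad, i.e. it maps over `s >>= fun a => pure ↑↑a`.
lemma prod_map_one_div_eq_hookWeight (s : Multiset ℕ+) :
    (s.map fun h => 1 / (h : ℚ)).prod = hookWeight s := by
  simp [hookWeight]

end PTree

/-- The hook length formula for plane trees counting increasing plane trees. -/
theorem hook_formula_plane_trees (n : ℕ) (hn : 1 ≤ n) :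
    (n.factorial : ℚ) *
      ∑ᶠ T : {t : PTree // t.size = n},
        ((T : PTree).hooks.map fun h => 1 / (h : ℚ)).prod
    = (Nat.doubleFactorial (2 * n - 3) : ℚ) := by
  obtain ⟨k, rfl⟩ : ∃ k, n = k + 1 := ⟨n - 1, by omega⟩
  simp only [PTree.prod_map_one_div_eq_hookWeight]
  rw [PTree.finsum_size_succ_eq_sum_node (fun t => PTree.hookWeight t.hooks),
    PTree.sum_hookWeight_hooks_node, PTree.forestWeightSum_eq_centralBinom_div,
    show 2 * (k + 1) - 3 = 2 * k - 1 by omega]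
  have hdf := congrArg (Nat.cast : ℕ → ℚ) (factorial_mul_centralBinom k)
  push_cast at hdf
  rw [factorial_succ]
  push_cast
  field_simp
  linear_combination hdf
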